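/- For all real numbers x ≥ 3 and l ≥ 2, the inequality f(x,l) ≥ x(x+1)²·f(x+1, l(1 − 1/(6(x+1)))) holds. -/

import Mathlib

/-!
Write `u = 1/(6(x+1))`. The recurrence `Γ(x+2) = (x+1) Γ(x+1)` turns the left-hand side into
`x (Γ((x+1) l⁷ (1-u)⁷ + 1) / Γ(x+1))³`, so, `Γ` being increasing on `[2, ∞)`, it suffices that
`(x+1)(1-u)⁷ ≤ x`. This follows from the third-order bound `(1-u)⁷ ≤ 1 - 7u + 21u²`, which gives
`(x+1)(1-u)⁷ ≤ x - 1/6 + 7/(12(x+1))`.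
-/

/-- The function `f(x,l) = x · (Γ(x·l⁷ + 1)/Γ(x+1))³`. -/
noncomputable def fGamma (x l : ℝ) : ℝ :=
  x * (Real.Gamma (x * l ^ 7 + 1) / Real.Gamma (x + 1)) ^ 3

theorem sq_mul_fGamma_add_one {x : ℝ} (hx : x + 1 ≠ 0) (m : ℝ) :
    (x + 1) ^ 2 * fGamma (x + 1) m = (Real.Gamma ((x + 1) * m ^ 7 + 1) / Real.Gamma (x + 1)) ^ 3 := by
  rw [fGamma, Real.Gamma_add_one hx]
  field_simp

theorem one_sub_pow_seven_le {u : ℝ} (hu : 0 ≤ u) : (1 - u) ^ 7 ≤ 1 - 7 * u + 21 * u ^ 2 := by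
  have hq : 0 ≤ 35 - 35 * u + 21 * u ^ 2 - 7 * u ^ 3 + u ^ 4 := by
    nlinarith [sq_nonneg (u ^ 2 - 7 / 2 * u), sq_nonneg (u - 2)]
  nlinarith [mul_nonneg (pow_nonneg hu 3) hq]

theorem mul_one_sub_inv_six_mul_pow_seven_le {y : ℝ} (hy : 7 / 2 ≤ y) :
    y * (1 - 1 / (6 * y)) ^ 7 ≤ y - 1 := by
  have hy0 : 0 < y := by linarith
  calc y * (1 - 1 / (6 * y)) ^ 7
      ≤ y * (1 - 7 * (1 / (6 * y)) + 21 * (1 / (6 * y)) ^ 2) :=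
        mul_le_mul_of_nonneg_left (one_sub_pow_seven_le (by positivity)) hy0.le
    _ = y - 7 / 6 + 7 / (12 * y) := by field_simp; ring
    _ ≤ y - 1 := by
        have : 7 / (12 * y) ≤ 1 / 6 := by rw [div_le_div_iff₀ (by positivity) (by norm_num)]; linarith
        linarith

theorem fGamma_recursive_bound (x l : ℝ) (hx : 3 ≤ x) (hl : 2 ≤ l) :
    x * (x + 1) ^ 2 * fGamma (x + 1) (l * (1 - 1 / (6 * (x + 1)))) ≤ fGamma x l := by
  set m := l * (1 - 1 / (6 * (x + 1)))
  have hm : 1 ≤ m := by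
    have : 1 / (6 * (x + 1)) ≤ 1 / 2 := by rw [div_le_div_iff₀ (by positivity) (by norm_num)]; linarith
    nlinarith
  have harg : (x + 1) * m ^ 7 ≤ x * l ^ 7 := by
    have key := mul_one_sub_inv_six_mul_pow_seven_le (y := x + 1) (by linarith)
    rw [add_sub_cancel_right] at key
    calc (x + 1) * m ^ 7 = (x + 1) * (1 - 1 / (6 * (x + 1))) ^ 7 * l ^ 7 := by ring
      _ ≤ x * l ^ 7 := by gcongr
  have harg_ge : 2 ≤ (x + 1) * m ^ 7 + 1 := by nlinarith [one_le_pow₀ (n := 7) hm]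
  have hGamma : Real.Gamma ((x + 1) * m ^ 7 + 1) ≤ Real.Gamma (x * l ^ 7 + 1) :=
    Real.Gamma_strictMonoOn_Ici.monotoneOn harg_ge (by simp only [Set.mem_Ici]; linarith)
      (by linarith)
  rw [mul_assoc, sq_mul_fGamma_add_one (by linarith), fGamma]
  gcongr
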